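/- Material equivalence of the two conditionals holds in CC/TT: for all formulas A, B and valuations v, the material biconditional (A ⊃ B) ⊃⊂ (A →cc B), defined as ((A ⊃ B) ⊃ (A →cc B)) ∧ ((A →cc B) ⊃ (A ⊃ B)), always receives value ≥ 1/2; but the indicative biconditional (A ⊃ B) ↔cc (A →cc B), defined as ((A ⊃ B) →cc (A →cc B)) ∧ ((A →cc B) →cc (A ⊃ B)), has value 0 under some valuation. -/
import Mathlib


/-- Trivalent truth values: 0, 1/2, 1. -/
inductive V : Type
  | zero
  | half
  | one
deriving DecidableEq, Repr

open V

/-- Strong Kleene negation. -/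
def vneg : V → V
  | zero => one
  | half => half
  | one => zero

/-- Strong Kleene conjunction (minimum). -/
def vmin : V → V → V
  | one, b => b
  | half, one => half
  | half, half => half
  | half, zero => zero
  | zero, _ => zero

/-- Strong Kleene disjunction (maximum). -/
def vmax : V → V → V
  | zero, b => b
  | half, zero => half
  | half, half => half
  | half, one => one
  | one, _ => one

/-- de Finetti conditional. -/
def df : V → V → V
  | one, c => c
  | _, _ => half

/-- Cooper–Cantwell conditional. -/
def cc : V → V → V
  | zero, _ => half
  | _, c => c

/-- Cooper's quasi-conjunction. -/
def qand : V → V → V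
  | zero, _ => zero
  | _, zero => zero
  | one, _ => one
  | _, one => one
  | half, half => half

/-- Cooper's quasi-disjunction. -/
def qor : V → V → V
  | one, _ => one
  | _, one => one
  | zero, _ => zero
  | _, zero => zero
  | half, half => half

/-- "value ≥ 1/2", i.e. designated / tolerantly true. -/
def des (x : V) : Prop := x ≠ V.zero

/-- Formulas with negation, conjunction, disjunction and the Cooper–Cantwell
indicative conditional. -/
inductive Form : Type
  | atom : ℕ → Form
  | neg : Form → Form
  | and : Form → Form → Form
  | or : Form → Form → Form
  | cond : Form → Form → Form
deriving DecidableEq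

/-- Trivalent CC valuation of formulas, extending a valuation of atoms. -/
def val (v : ℕ → V) : Form → V
  | .atom n => v n
  | .neg A => vneg (val v A)
  | .and A B => vmin (val v A) (val v B)
  | .or A B => vmax (val v A) (val v B)
  | .cond A B => cc (val v A) (val v B)

/-- The Strong Kleene material conditional A ⊃ B := ¬(A ∧ ¬B). -/
def mat (A B : Form) : Form := Form.neg (Form.and A (Form.neg B))

/-- Material equivalence of the two conditionals holds in CC/TT, but the
indicative biconditional between them can take value 0. -/
theorem cc_material_equivalence :
    (∀ (A B : Form) (v : ℕ → V),
      des (val v (Form.and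
        (mat (mat A B) (Form.cond A B))
        (mat (Form.cond A B) (mat A B))))) ∧
    (∃ (p q : ℕ) (v : ℕ → V),
      val v (Form.and
        (Form.cond (mat (Form.atom p) (Form.atom q))
          (Form.cond (Form.atom p) (Form.atom q)))
        (Form.cond (Form.cond (Form.atom p) (Form.atom q))
          (mat (Form.atom p) (Form.atom q)))) = V.zero) := by
  constructor
  · intro A B v
    simp only [val, mat, des]
    cases val v A <;> cases val v B <;> decide
  · exact ⟨0, 1, fun n => if n = 0 then V.half else V.zero, by decide⟩
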